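/- For twice differentiable ξ with tξ''(t) ≠ 2ξ'(t) on an interval I ⊆ (0,∞), the Roter-type coefficients φ = −(6tξ − 4t²ξ' + t³ξ'')/(tξ'' − 2ξ')², μ = −(6ξξ' − 6tξ'² + 3tξξ'' + t²ξ'ξ'')/(t(tξ'' − 2ξ')²) [as given], η = −2(4ξξ'² − 4tξ'³ + 2tξξ'ξ'' + t²ξξ''²)/(t³(tξ'' − 2ξ')²) satisfy the consistency identity L₁ + φ⁻¹μ = 2φ⁻¹(μ² − φη), where L₁ = (ξ − tξ')/t³, provided φ ≠ 0. -/

import Mathlib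

/-!
Multiplying by `φ` turns the identity into `φ L₁ + μ = 2 (μ² − φ η)`; clearing the common
denominator `t³ (t ξ'' − 2 ξ')⁴` makes that a polynomial identity in `t, ξ, ξ', ξ''`.
-/

noncomputable section

/-- The Roter-type coefficient `φ` of the 4-dimensional interior black hole metric. -/
def phiC (ξ ξ' ξ'' : ℝ → ℝ) (t : ℝ) : ℝ :=
  -(6 * t * ξ t - 4 * t ^ 2 * ξ' t + t ^ 3 * ξ'' t) / (t * ξ'' t - 2 * ξ' t) ^ 2

/-- The Roter-type coefficient `μ`. -/
def muC (ξ ξ' ξ'' : ℝ → ℝ) (t : ℝ) : ℝ :=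
  -(6 * ξ t * ξ' t - 6 * t * (ξ' t) ^ 2 + 3 * t * ξ t * ξ'' t + t ^ 2 * ξ' t * ξ'' t) /
    (t * (t * ξ'' t - 2 * ξ' t) ^ 2)

/-- The Roter-type coefficient `η`. -/
def etaC (ξ ξ' ξ'' : ℝ → ℝ) (t : ℝ) : ℝ :=
  -(2 * (4 * ξ t * (ξ' t) ^ 2 - 4 * t * (ξ' t) ^ 3 + 2 * t * ξ t * ξ' t * ξ'' t
      + t ^ 2 * ξ t * (ξ'' t) ^ 2)) /
    (t ^ 3 * (t * ξ'' t - 2 * ξ' t) ^ 2)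

theorem add_inv_mul_eq_two_inv_mul_iff {K : Type*} [Field K] {φ : K} (hφ : φ ≠ 0) (L μ η : K) :
    L + φ⁻¹ * μ = 2 * φ⁻¹ * (μ ^ 2 - φ * η) ↔ φ * L + μ = 2 * (μ ^ 2 - φ * η) := by
  rw [← mul_right_inj' hφ]
  field_simp

theorem phiC_mul_add_muC_eq {ξ ξ' ξ'' : ℝ → ℝ} {t : ℝ} (ht : t ≠ 0) (hden : t * ξ'' t ≠ 2 * ξ' t) :
    phiC ξ ξ' ξ'' t * ((ξ t - t * ξ' t) / t ^ 3) + muC ξ ξ' ξ'' t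
      = 2 * (muC ξ ξ' ξ'' t ^ 2 - phiC ξ ξ' ξ'' t * etaC ξ ξ' ξ'' t) := by
  unfold phiC muC etaC
  generalize ξ t = x, ξ' t = y, ξ'' t = z at *
  have hD : t * z - 2 * y ≠ 0 := sub_ne_zero.mpr hden
  rw [div_mul_div_comm, div_pow, div_mul_div_comm, div_add_div _ _ (by positivity) (by positivity),
    div_sub_div _ _ (by positivity) (by positivity), mul_div_assoc',
    div_eq_div_iff (by positivity) (by positivity)]
  ring

theorem stmt_17_general (a b : ℝ) (ha : 0 ≤ a)
    (ξ ξ' ξ'' : ℝ → ℝ)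
    (hden : ∀ t ∈ Set.Ioo a b, t * ξ'' t ≠ 2 * ξ' t)
    (hφ : ∀ t ∈ Set.Ioo a b, phiC ξ ξ' ξ'' t ≠ 0) :
    ∀ t ∈ Set.Ioo a b,
      (ξ t - t * ξ' t) / t ^ 3 + (phiC ξ ξ' ξ'' t)⁻¹ * muC ξ ξ' ξ'' t
        = 2 * (phiC ξ ξ' ξ'' t)⁻¹ *
            ((muC ξ ξ' ξ'' t) ^ 2 - phiC ξ ξ' ξ'' t * etaC ξ ξ' ξ'' t) := by
  intro t ht
  rw [add_inv_mul_eq_two_inv_mul_iff (hφ t ht)]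
  exact phiC_mul_add_muC_eq (ha.trans_lt ht.1).ne' (hden t ht)

/-- Consistency identity `L₁ + φ⁻¹μ = 2φ⁻¹(μ² − φη)` for the Roter-type
coefficients of the 4-dimensional interior black hole metric, where
`L₁ = (ξ − tξ')/t³`. -/
theorem stmt_17 (a b : ℝ) (ha : 0 ≤ a) (hab : a < b)
    (ξ ξ' ξ'' : ℝ → ℝ)
    (hξ : ∀ t ∈ Set.Ioo a b, HasDerivAt ξ (ξ' t) t)
    (hξ' : ∀ t ∈ Set.Ioo a b, HasDerivAt ξ' (ξ'' t) t)
    (hden : ∀ t ∈ Set.Ioo a b, t * ξ'' t ≠ 2 * ξ' t)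
    (hφ : ∀ t ∈ Set.Ioo a b, phiC ξ ξ' ξ'' t ≠ 0) :
    ∀ t ∈ Set.Ioo a b,
      (ξ t - t * ξ' t) / t ^ 3 + (phiC ξ ξ' ξ'' t)⁻¹ * muC ξ ξ' ξ'' t
        = 2 * (phiC ξ ξ' ξ'' t)⁻¹ *
            ((muC ξ ξ' ξ'' t) ^ 2 - phiC ξ ξ' ξ'' t * etaC ξ ξ' ξ'' t) :=
  stmt_17_general a b ha ξ ξ' ξ'' hden hφ

end
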